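/- Let f ∈ LC with 0 in the interior of supp(f). Then the polar function f° (y) = inf_{x ∈ supp f} e^{−⟨x,y⟩}/f(x) is again a non-degenerate integrable log-concave function, i.e., 0 < ∫ f°(x) dx < ∞. -/

import Mathlib

/-!
If `f ≥ m > 0` on a ball `B(0, ρ)`, then testing the infimum defining `f°(y)` at the point
`ρ y / ‖y‖` gives `f°(y) ≤ e^{-ρ‖y‖} / m`, which is integrable. Conversely an integrable
log-concave function decays exponentially, `f(x) ≤ C e^{-δ‖x‖}`, so `f°(y) ≥ 1 / C` whenever
`‖y‖ ≤ δ`. The decay comes from log-concavity twice: `f(x) f(u) ≤ f((x + u) / 2)²` with `u` in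
the ball bounds `f(x)` by the integral of `f` over a ball around `x / 2`, so `f` is bounded and
small far out; and along the segment `[0, x]`, smallness on one sphere forces geometric decay.
-/

open MeasureTheory Filter
noncomputable section

/-- `ℝⁿ` as a Euclidean space. -/
abbrev Euc (n : ℕ) := EuclideanSpace ℝ (Fin n)

/-- `f` is a non-degenerate, upper semicontinuous, integrable log-concave
function on `ℝⁿ` (the class `LC`): `f ≥ 0`, `f` is upper semicontinuous,
log-concave, integrable with `0 < ∫ f`, and the interior of its support is
non-empty. -/
def IsLC {n : ℕ} (f : Euc n → ℝ) : Prop :=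
  (∀ x, 0 ≤ f x) ∧ UpperSemicontinuous f ∧
  (∀ x y : Euc n, ∀ a b : ℝ, 0 ≤ a → 0 ≤ b → a + b = 1 →
      f x ^ a * f y ^ b ≤ f (a • x + b • y)) ∧
  Integrable f ∧ 0 < ∫ x, f x ∧ (interior (Function.support f)).Nonempty

/-- The polar of `f` with respect to `z`:
`f^z(y) = inf_{x ∈ supp f} e^{−⟨x−z, y−z⟩}/f(x)`. -/
def polarAt {n : ℕ} (f : Euc n → ℝ) (z y : Euc n) : ℝ :=
  ⨅ x : Function.support f,
    Real.exp (-(inner ℝ ((x : Euc n) - z) (y - z) : ℝ)) / f x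

open Real Metric Function

lemma mul_le_sq_div_of_sqrt_mul_le {a m v I : ℝ} (hv : 0 < v) (h : √(a * m) * v ≤ I) :
    a * m ≤ (I / v) ^ 2 := by
  have h' : √(a * m) ≤ I / v := (le_div_iff₀ hv).mpr h
  exact (sqrt_le_left ((sqrt_nonneg _).trans h')).mp h'

lemma tendsto_setIntegral_compl_closedBall {X : Type*} [PseudoMetricSpace X] [MeasurableSpace X]
    [OpensMeasurableSpace X] {μ : Measure X} {g : X → ℝ} (hg : Integrable g μ) (x₀ : X) :
    Tendsto (fun k : ℕ => ∫ x in (closedBall x₀ k)ᶜ, g x ∂μ) atTop (nhds 0) := by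
  have hanti : Antitone fun k : ℕ => (closedBall x₀ k)ᶜ := fun i j hij =>
    Set.compl_subset_compl.mpr (closedBall_subset_closedBall (by exact_mod_cast hij))
  have hempty : (⋂ k : ℕ, (closedBall x₀ k)ᶜ) = ∅ := by
    simp only [← Set.compl_iUnion, Set.compl_empty_iff, Set.eq_univ_iff_forall, Set.mem_iUnion,
      mem_closedBall]
    exact fun x => exists_nat_ge (dist x x₀)
  simpa [hempty] using tendsto_setIntegral_of_antitone (fun _ => measurableSet_closedBall.compl)
    hanti ⟨0, hg.integrableOn⟩

lemma integrable_exp_neg_mul_norm {E : Type*} [NormedAddCommGroup E] [NormedSpace ℝ E]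
    [FiniteDimensional ℝ E] [MeasurableSpace E] [BorelSpace E] (μ : Measure E)
    [μ.IsAddHaarMeasure] {c : ℝ} (hc : 0 < c) :
    Integrable (fun x : E => exp (-c * ‖x‖)) μ := by
  rcases subsingleton_or_nontrivial E with hE | hE
  · exact Integrable.of_finite
  rw [integrable_fun_norm_addHaar μ (f := fun t => exp (-c * t))]
  refine (integrableOn_rpow_mul_exp_neg_mul_rpow (s := (Module.finrank ℝ E - 1 : ℕ))
    (neg_one_lt_zero.trans_le (Nat.cast_nonneg _)) one_pos hc).congr_fun (fun t _ => ?_)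
    measurableSet_Ioi
  simp [rpow_natCast]

def IsLogConcave {E : Type*} [AddCommGroup E] [Module ℝ E] (f : E → ℝ) : Prop :=
  (∀ x, 0 ≤ f x) ∧ ∀ x y : E, ∀ a b : ℝ, 0 ≤ a → 0 ≤ b → a + b = 1 →
    f x ^ a * f y ^ b ≤ f (a • x + b • y)

lemma IsLC.isLogConcave {n : ℕ} {f : Euc n → ℝ} (hf : IsLC f) : IsLogConcave f :=
  ⟨hf.1, hf.2.2.1⟩

namespace IsLogConcave

variable {E : Type*} [NormedAddCommGroup E] [NormedSpace ℝ E] {f : E → ℝ}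

lemma pos_of_mem_support (hf : IsLogConcave f) {x : E} (hx : x ∈ support f) : 0 < f x :=
  (hf.1 x).lt_of_ne' hx

lemma rpow_mul_rpow_pos (hf : IsLogConcave f) {x y : E} (hx : x ∈ support f)
    (hy : y ∈ support f) (a b : ℝ) : 0 < f x ^ a * f y ^ b :=
  mul_pos (rpow_pos_of_pos (hf.pos_of_mem_support hx) a)
    (rpow_pos_of_pos (hf.pos_of_mem_support hy) b)

lemma convex_support (hf : IsLogConcave f) : Convex ℝ (support f) :=
  fun x hx y hy a b ha hb hab =>
    ((hf.rpow_mul_rpow_pos hx hy a b).trans_le (hf.2 x y a b ha hb hab)).ne'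

lemma concaveOn_log (hf : IsLogConcave f) : ConcaveOn ℝ (support f) (fun x => log (f x)) := by
  refine ⟨hf.convex_support, fun x hx y hy a b ha hb hab => ?_⟩
  have hfx := hf.pos_of_mem_support hx
  have hfy := hf.pos_of_mem_support hy
  have := log_le_log (hf.rpow_mul_rpow_pos hx hy a b) (hf.2 x y a b ha hb hab)
  rwa [log_mul (rpow_pos_of_pos hfx a).ne' (rpow_pos_of_pos hfy b).ne', log_rpow hfx,
    log_rpow hfy] at this

lemma le_mul_exp_neg_norm_of_le_half (hf : IsLogConcave f) (hf0 : 0 < f 0) {R : ℝ}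
    (hR : 0 < R) (hsphere : ∀ u : E, ‖u‖ = R → f u ≤ f 0 / 2) {x : E} (hx : R ≤ ‖x‖) :
    f x ≤ f 0 * exp (-(log 2 / R) * ‖x‖) := by
  rcases (hf.1 x).eq_or_lt with hx0 | hx0
  · rw [← hx0]; positivity
  have hxpos : 0 < ‖x‖ := hR.trans_le hx
  set t := R / ‖x‖
  have ht : 0 < t := div_pos hR hxpos
  have hsegment := hf.2 x 0 t (1 - t) ht.le (sub_nonneg.mpr ((div_le_one hxpos).mpr hx))
    (by ring)
  rw [smul_zero, add_zero] at hsegment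
  have htx : ‖t • x‖ = R := by
    rw [norm_smul, norm_of_nonneg ht.le, div_mul_cancel₀ _ hxpos.ne']
  have hlog := log_le_log (by positivity) (hsegment.trans (hsphere _ htx))
  rw [log_mul (by positivity) (by positivity), log_rpow hx0, log_rpow hf0,
    log_div hf0.ne' two_ne_zero] at hlog
  have hrate : log 2 / R * ‖x‖ * t = log 2 := by simp only [t]; field_simp
  have hscaled : (log (f x) - log (f 0)) * t ≤ (-(log 2 / R) * ‖x‖) * t := by
    rw [neg_mul, neg_mul, hrate]; linarith
  rw [← exp_log hx0, ← exp_log hf0, ← exp_add, exp_le_exp]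
  linarith [le_of_mul_le_mul_right hscaled ht]

variable [FiniteDimensional ℝ E]

lemma continuousAt (hf : IsLogConcave f) {x : E} (hx : x ∈ interior (support f)) :
    ContinuousAt f x := by
  have hlog : ContinuousAt (fun x => log (f x)) x :=
    (hf.concaveOn_log.continuousOn_interior x hx).continuousAt (isOpen_interior.mem_nhds hx)
  refine hlog.rexp.congr ?_
  filter_upwards [isOpen_interior.mem_nhds hx] with u hu
  exact exp_log (hf.pos_of_mem_support (interior_subset hu))

lemma exists_closedBall_half_le (hf : IsLogConcave f) {x : E}
    (hx : x ∈ interior (support f)) : ∃ ρ > 0, ∀ u ∈ closedBall x ρ, f x / 2 ≤ f u := by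
  have hfx := hf.pos_of_mem_support (interior_subset hx)
  obtain ⟨ρ, hρ, hball⟩ := nhds_basis_closedBall.eventually_iff.mp
    ((hf.continuousAt hx).eventually (Ioi_mem_nhds (half_lt_self hfx)))
  exact ⟨ρ, hρ, fun u hu => (hball hu).le⟩

variable [MeasurableSpace E] [BorelSpace E] (μ : Measure E) [μ.IsAddHaarMeasure]

/-- Every `z` in the ball of radius `ρ / 2` around `x / 2` is the midpoint of `x` and a point
of the ball of radius `ρ`, where `f ≥ m`. -/
lemma sqrt_mul_measureReal_ball_le_setIntegral (hf : IsLogConcave f) (hint : Integrable f μ)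
    {ρ m : ℝ} (hm : 0 ≤ m) (hball : ∀ u ∈ ball (0 : E) ρ, m ≤ f u) (x : E) :
    √(f x * m) * μ.real (ball 0 (ρ / 2)) ≤ ∫ z in ball ((1 / 2 : ℝ) • x) (ρ / 2), f z ∂μ := by
  rw [measureReal_def, ← Measure.addHaar_ball_center μ ((1 / 2 : ℝ) • x), ← measureReal_def]
  refine setIntegral_ge_of_const_le_real measurableSet_ball measure_ball_lt_top.ne
    (fun z hz => ?_) hint.integrableOn
  set u : E := (2 : ℝ) • z - x
  have hzu : (1 / 2 : ℝ) • x + (1 / 2 : ℝ) • u = z := by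
    simp only [u, smul_sub, smul_smul]
    norm_num
  have hu : u ∈ ball (0 : E) ρ := by
    have : u = (2 : ℝ) • (z - (1 / 2 : ℝ) • x) := by
      simp only [u, smul_sub, smul_smul]; norm_num
    rw [mem_ball_zero_iff, this, norm_smul, Real.norm_ofNat]
    rw [mem_ball, dist_eq_norm] at hz
    linarith
  calc √(f x * m) = f x ^ (1 / 2 : ℝ) * m ^ (1 / 2 : ℝ) := by
        rw [sqrt_mul (hf.1 x), sqrt_eq_rpow, sqrt_eq_rpow]
    _ ≤ f x ^ (1 / 2 : ℝ) * f u ^ (1 / 2 : ℝ) :=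
        mul_le_mul_of_nonneg_left (rpow_le_rpow hm (hball u hu) (by norm_num))
          (rpow_nonneg (hf.1 x) _)
    _ ≤ f z := hzu ▸ hf.2 x u _ _ (by norm_num) (by norm_num) (by norm_num)

lemma bddAbove_range (hf : IsLogConcave f) (hint : Integrable f μ) {ρ m : ℝ} (hρ : 0 < ρ)
    (hm : 0 < m) (hball : ∀ u ∈ ball (0 : E) ρ, m ≤ f u) : BddAbove (Set.range f) := by
  have hv : 0 < μ.real (ball (0 : E) (ρ / 2)) :=
    ENNReal.toReal_pos (measure_ball_pos μ 0 (half_pos hρ)).ne' measure_ball_lt_top.ne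
  refine ⟨((∫ z, f z ∂μ) / μ.real (ball (0 : E) (ρ / 2))) ^ 2 / m,
    Set.forall_mem_range.mpr fun x => ?_⟩
  rw [le_div_iff₀ hm]
  exact mul_le_sq_div_of_sqrt_mul_le hv
    ((hf.sqrt_mul_measureReal_ball_le_setIntegral μ hint hm.le hball x).trans
      (setIntegral_le_integral hint (Eventually.of_forall hf.1)))

lemma exists_forall_norm_ge_le (hf : IsLogConcave f) (hint : Integrable f μ) {ρ m ε : ℝ}
    (hρ : 0 < ρ) (hm : 0 < m) (hball : ∀ u ∈ ball (0 : E) ρ, m ≤ f u) (hε : 0 < ε) :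
    ∃ R, ∀ x : E, R ≤ ‖x‖ → f x ≤ ε := by
  set v := μ.real (ball (0 : E) (ρ / 2))
  have hv : 0 < v :=
    ENNReal.toReal_pos (measure_ball_pos μ 0 (half_pos hρ)).ne' measure_ball_lt_top.ne
  obtain ⟨k, hk⟩ := ((tendsto_setIntegral_compl_closedBall hint 0).eventually_lt_const
    (show 0 < √(ε * m) * v by positivity)).exists
  refine ⟨2 * k + ρ, fun x hx => ?_⟩
  have hfar : ball ((1 / 2 : ℝ) • x) (ρ / 2) ⊆ (closedBall 0 k)ᶜ := by
    intro z hz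
    rw [Set.mem_compl_iff, mem_closedBall, dist_zero_right, not_le]
    rw [mem_ball, dist_comm, dist_eq_norm] at hz
    have := norm_sub_norm_le ((1 / 2 : ℝ) • x) z
    rw [norm_smul, norm_of_nonneg (by norm_num : (0 : ℝ) ≤ 1 / 2)] at this
    linarith
  have h := (hf.sqrt_mul_measureReal_ball_le_setIntegral μ hint hm.le hball x).trans
    ((setIntegral_mono_set hint.integrableOn (Eventually.of_forall hf.1)
      hfar.eventuallyLE).trans hk.le)
  have := (sqrt_le_sqrt_iff (by positivity)).mp ((mul_le_mul_iff_left₀ hv).mp h)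
  exact le_of_mul_le_mul_right this hm

lemma exists_le_mul_exp_neg_norm (hf : IsLogConcave f) (hint : Integrable f μ)
    (h0 : (0 : E) ∈ interior (support f)) :
    ∃ C > 0, ∃ δ > 0, ∀ x : E, f x ≤ C * exp (-δ * ‖x‖) := by
  have hf0 := hf.pos_of_mem_support (interior_subset h0)
  obtain ⟨ρ, hρ, hball⟩ := hf.exists_closedBall_half_le h0
  replace hball : ∀ u ∈ ball (0 : E) ρ, f 0 / 2 ≤ f u :=
    fun u hu => hball u (ball_subset_closedBall hu)
  obtain ⟨M, hM⟩ := hf.bddAbove_range μ hint hρ (half_pos hf0) hball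
  obtain ⟨R, hR⟩ := hf.exists_forall_norm_ge_le μ hint hρ (half_pos hf0) hball (half_pos hf0)
  set R' := max R 1
  have hR' : 0 < R' := lt_max_of_lt_right one_pos
  have hM0 : 0 ≤ M := hf0.le.trans (hM (Set.mem_range_self 0))
  refine ⟨max (f 0) (M * exp (log 2 / R' * R')), lt_max_of_lt_left hf0,
    log 2 / R', by positivity, fun x => ?_⟩
  rcases le_or_gt R' ‖x‖ with hx | hx
  · calc f x ≤ f 0 * exp (-(log 2 / R') * ‖x‖) :=
          hf.le_mul_exp_neg_norm_of_le_half hf0 hR'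
            (fun u hu => hR u (hu ▸ le_max_left R 1)) hx
      _ ≤ _ := by gcongr; exact le_max_left _ _
  · calc f x ≤ M := hM (Set.mem_range_self x)
      _ ≤ M * exp (log 2 / R' * R') * exp (-(log 2 / R') * ‖x‖) := by
          rw [mul_assoc, ← exp_add]
          refine le_mul_of_one_le_right hM0 (one_le_exp ?_)
          have : 0 ≤ log 2 / R' := by positivity
          nlinarith
      _ ≤ _ := by gcongr; exact le_max_right _ _

end IsLogConcave

section Polar

variable {n : ℕ} {f : Euc n → ℝ}

lemma polarAt_le (hf : ∀ x, 0 ≤ f x) {x : Euc n} (hx : x ∈ support f) (z y : Euc n) :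
    polarAt f z y ≤ exp (-inner ℝ (x - z) (y - z)) / f x :=
  ciInf_le (f := fun x : support f => exp (-inner ℝ ((x : Euc n) - z) (y - z)) / f x)
    ⟨0, Set.forall_mem_range.mpr fun x => div_nonneg (exp_nonneg _) (hf x)⟩ ⟨x, hx⟩

lemma le_polarAt (hne : (support f).Nonempty) {c : ℝ} {z y : Euc n}
    (h : ∀ x ∈ support f, c ≤ exp (-inner ℝ (x - z) (y - z)) / f x) : c ≤ polarAt f z y :=
  have := hne.to_subtype
  le_ciInf fun x => h x x.2

lemma polarAt_zero_le_inv_mul_exp (hf : ∀ x, 0 ≤ f x) {ρ m : ℝ} (hρ : 0 ≤ ρ) (hm : 0 < m)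
    (hball : ∀ u ∈ closedBall (0 : Euc n) ρ, m ≤ f u) (y : Euc n) :
    polarAt f 0 y ≤ m⁻¹ * exp (-ρ * ‖y‖) := by
  set x := (ρ / ‖y‖) • y
  have hx : ‖x‖ ≤ ρ ∧ inner ℝ x y = ρ * ‖y‖ := by
    rw [norm_smul, norm_div, norm_norm, norm_of_nonneg hρ, real_inner_smul_left,
      real_inner_self_eq_norm_sq]
    rcases eq_or_ne ‖y‖ 0 with hy | hy
    · simp [hy, hρ]
    · constructor
      · rw [div_mul_cancel₀ _ hy]
      · field_simp
  have hfx := hball x (mem_closedBall_zero_iff.mpr hx.1)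
  calc polarAt f 0 y ≤ exp (-inner ℝ x y) / f x := by
        simpa using polarAt_le hf (hm.trans_le hfx).ne' 0 y
    _ ≤ exp (-ρ * ‖y‖) / m := by
        rw [hx.2, neg_mul]
        exact div_le_div_of_nonneg_left (exp_nonneg _) hm hfx
    _ = m⁻¹ * exp (-ρ * ‖y‖) := div_eq_inv_mul _ _

lemma inv_le_polarAt_zero (hf : ∀ x, 0 ≤ f x) (hne : (support f).Nonempty) {C δ : ℝ}
    (hC : 0 < C) (hdecay : ∀ x, f x ≤ C * exp (-δ * ‖x‖)) {y : Euc n} (hy : ‖y‖ ≤ δ) :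
    C⁻¹ ≤ polarAt f 0 y := by
  refine le_polarAt hne fun x hx => ?_
  rw [sub_zero, sub_zero, le_div_iff₀ ((hf x).lt_of_ne' hx), inv_mul_le_iff₀ hC]
  calc f x ≤ C * exp (-δ * ‖x‖) := hdecay x
    _ ≤ C * exp (-inner ℝ x y) := by
        gcongr
        nlinarith [real_inner_le_norm x y, norm_nonneg x]

end Polar

/-- for `f ∈ LC` with `0` in the interior of its support, the
polar function `f°` is again integrable with positive integral:
`0 < ∫ f° < ∞`. -/
theorem polar_integrable (n : ℕ) (f : Euc n → ℝ) (hf : IsLC f)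
    (h0 : (0 : Euc n) ∈ interior (Function.support f)) :
    0 < ∫⁻ y, ENNReal.ofReal (polarAt f 0 y) ∧
      ∫⁻ y, ENNReal.ofReal (polarAt f 0 y) < ⊤ := by
  have hlc := hf.isLogConcave
  have hf0 := hlc.pos_of_mem_support (interior_subset h0)
  obtain ⟨C, hC, δ, hδ, hdecay⟩ := hlc.exists_le_mul_exp_neg_norm volume hf.2.2.2.1 h0
  obtain ⟨ρ, hρ, hball⟩ := hlc.exists_closedBall_half_le h0
  constructor
  · calc 0 < ENNReal.ofReal C⁻¹ * volume (closedBall (0 : Euc n) δ) :=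
          ENNReal.mul_pos (ENNReal.ofReal_pos.mpr (inv_pos.mpr hC)).ne'
            (measure_closedBall_pos volume 0 hδ).ne'
      _ = ∫⁻ y in closedBall 0 δ, ENNReal.ofReal C⁻¹ := (setLIntegral_const _ _).symm
      _ ≤ ∫⁻ y in closedBall 0 δ, ENNReal.ofReal (polarAt f 0 y) :=
          setLIntegral_mono' measurableSet_closedBall fun y hy => ENNReal.ofReal_le_ofReal
            (inv_le_polarAt_zero hf.1 ⟨0, interior_subset h0⟩ hC hdecay
              (mem_closedBall_zero_iff.mp hy))
      _ ≤ ∫⁻ y, ENNReal.ofReal (polarAt f 0 y) := setLIntegral_le_lintegral _ _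
  · calc ∫⁻ y, ENNReal.ofReal (polarAt f 0 y)
        ≤ ∫⁻ y, ENNReal.ofReal ((f 0 / 2)⁻¹ * exp (-ρ * ‖y‖)) := lintegral_mono fun y =>
          ENNReal.ofReal_le_ofReal (polarAt_zero_le_inv_mul_exp hf.1 hρ.le (half_pos hf0) hball y)
      _ < ⊤ := ((integrable_exp_neg_mul_norm volume hρ).const_mul _).lintegral_lt_top
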